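/- Let G consist of disjoint chains of nodes each labeled P (cost +1) or V (cost −1). A prefix subschedule S of a schedule of G is valid iff at every prefix the number of P-operations does not exceed the number of V-operations, i.e., iff height(S) = 0 where costs are +1 for P and −1 for V. Consequently, for nodes v, w, there exists a valid subschedule in which v precedes w if and only if the minimum over cuts Γ (with Γ containing v and w and with w the last node of its chain portion) of the height of the optimal w-terminal schedule of the prefix subgraph G[Γ] equals 0. -/

import Mathlib

def cost (L : List ℤ) : ℤ := L.sum

def height (L : List ℤ) : ℤ :=
  ((List.range (L.length + 1)).map fun k => (L.take k).sum).foldr max 0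

def fall (L : List ℤ) : ℤ := height L - cost L

variable {p : ℕ}

/-- Realize a word of chain indices as the sequence of node costs obtained by,
at each step, consuming the next unused node of the indicated chain. -/
def realize (C : Fin p → List ℤ) : List (Fin p) → List ℤ
  | [] => []
  | i :: w => (C i).headD 0 :: realize (Function.update C i (C i).tail) w

/-- A schedule of the chain graph `C`: a word using each chain exactly up to
its length (a linear extension, realized chainwise). -/
def IsSched (C : Fin p → List ℤ) (w : List (Fin p)) : Prop :=
  ∀ i, w.count i = (C i).length

/-- A subschedule: a prefix of some schedule. -/
def IsSub (C : Fin p → List ℤ) (w : List (Fin p)) : Prop :=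
  ∀ i, w.count i ≤ (C i).length

/-- positions in `u` at which chain `i` is scheduled. -/
def occIdx (u : List (Fin p)) (i : Fin p) : List ℕ :=
  (List.range u.length).filter fun t => decide (u[t]? = some i)

/-- In the word `u`, node number `a` (0-based) of chain `i` occurs before node
number `b` of chain `j`. -/
def Precedes (u : List (Fin p)) (i : Fin p) (a : ℕ) (j : Fin p) (b : ℕ) : Prop :=
  ∃ s t, (occIdx u i)[a]? = some s ∧ (occIdx u j)[b]? = some t ∧ s < t

/-- A subschedule is valid when, at every prefix, the number of `P` operations
(+1) does not exceed the number of `V` operations (−1). -/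
def ValidWord (C : Fin p → List ℤ) (u : List (Fin p)) : Prop :=
  ∀ t, ((realize C u).take t).sum ≤ 0

/-!
The height of a list is the maximum of `0` and its prefix sums, so it vanishes exactly when
every prefix sum is `≤ 0`, which is validity.

For the race, cut a valid subschedule right after node `b` of chain `j`: the numbers of nodes
it has used from each chain form a cut `Γ`, and the truncated word is a `j`-terminal schedule
of `G[Γ]` in which node `a` of chain `i` already occurs; being a prefix of a valid word it has
height `0`. Conversely a `j`-terminal schedule of height `0` of some `G[Γ]` is itself a valid
subschedule in which node `a` of chain `i` precedes the final node `b` of chain `j`. Since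
cuts exist (`sInf ∅ = 0` in `ℕ`, so this matters), the minimum height is `0` exactly when some
cut attains height `0`.
-/

theorem List.foldr_max_le_iff {α : Type*} [LinearOrder α] (l : List α) (c d : α) :
    l.foldr max c ≤ d ↔ c ≤ d ∧ ∀ x ∈ l, x ≤ d := by
  induction l with
  | nil => simp
  | cons x l ih => simp [ih, and_left_comm]

theorem height_nonneg (L : List ℤ) : 0 ≤ height L :=
  ((List.foldr_max_le_iff _ _ _).mp le_rfl).1

theorem height_eq_zero_iff (L : List ℤ) : height L = 0 ↔ ∀ t, (L.take t).sum ≤ 0 := by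
  rw [← (height_nonneg L).ge_iff_eq', height, List.foldr_max_le_iff]
  simp only [le_refl, true_and, List.mem_map, List.mem_range, forall_exists_index, and_imp,
    forall_apply_eq_imp_iff₂]
  refine ⟨fun h t => ?_, fun h t _ => h t⟩
  rcases le_or_gt t L.length with ht | ht
  · exact h t (by omega)
  · simpa [List.take_of_length_le ht.le] using h L.length (by omega)

theorem realize_take (C : Fin p → List ℤ) (w : List (Fin p)) (n : ℕ) :
    realize C (w.take n) = (realize C w).take n := by
  induction w generalizing C n with
  | nil => simp [realize]
  | cons x w ih => cases n <;> simp [realize, ih]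

theorem realize_congr {C D : Fin p → List ℤ} {w : List (Fin p)}
    (h : ∀ k, (C k).take (w.count k) = (D k).take (w.count k)) :
    realize C w = realize D w := by
  induction w generalizing C D with
  | nil => rfl
  | cons x w ih =>
    have hx : (C x).take (w.count x + 1) = (D x).take (w.count x + 1) := by
      simpa using h x
    have hhead : (C x).headD 0 = (D x).headD 0 := by
      rw [List.headD_eq_head?, List.headD_eq_head?]
      congr 1
      simpa [List.head?_take] using congrArg (·.head?) hx
    simp only [realize, hhead]
    congr 1
    refine ih fun k => ?_
    rcases eq_or_ne k x with rfl | hk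
    · simpa [List.tail_take_eq_take_tail] using congrArg List.tail hx
    · simpa [hk, List.count_cons_of_ne (Ne.symm hk)] using h k

theorem realize_truncate {C : Fin p → List ℤ} {Γ : Fin p → ℕ} {w : List (Fin p)}
    (hw : ∀ k, w.count k ≤ Γ k) :
    realize (fun k => (C k).take (Γ k)) w = realize C w :=
  realize_congr fun k => by rw [List.take_take, min_eq_left (hw k)]

theorem validWord_iff_height_eq_zero (C : Fin p → List ℤ) (u : List (Fin p)) :
    ValidWord C u ↔ height (realize C u) = 0 :=
  (height_eq_zero_iff _).symm

theorem ValidWord.of_prefix {C : Fin p → List ℤ} {u v : List (Fin p)} (hu : ValidWord C u)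
    (hvu : v <+: u) : ValidWord C v := by
  intro t
  rw [List.prefix_iff_eq_take.mp hvu, realize_take, List.take_take]
  exact hu _

theorem IsSub.of_prefix {C : Fin p → List ℤ} {u v : List (Fin p)} (hu : IsSub C u)
    (hvu : v <+: u) : IsSub C v :=
  fun k => (hvu.count_le k).trans (hu k)

theorem isSched_truncate_iff {C : Fin p → List ℤ} {Γ : Fin p → ℕ}
    (hΓ : ∀ k, Γ k ≤ (C k).length) (w : List (Fin p)) :
    IsSched (fun k => (C k).take (Γ k)) w ↔ ∀ k, w.count k = Γ k := by
  simp only [IsSched, List.length_take, min_eq_left (hΓ _)]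

theorem occIdx_cons (x : Fin p) (u : List (Fin p)) (i : Fin p) :
    occIdx (x :: u) i = (if x = i then [0] else []) ++ (occIdx u i).map (· + 1) := by
  by_cases hx : x = i <;>
    simp [occIdx, List.range_succ_eq_map, List.filter_map, Function.comp_def, hx]

theorem length_occIdx (u : List (Fin p)) (i : Fin p) : (occIdx u i).length = u.count i := by
  induction u with
  | nil => rfl
  | cons x u ih => by_cases hx : x = i <;> simp [occIdx_cons, hx, ih]

theorem getElem?_occIdx_eq_some_iff (u : List (Fin p)) (i : Fin p) (a s : ℕ) :
    (occIdx u i)[a]? = some s ↔ u[s]? = some i ∧ (u.take s).count i = a := by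
  induction u generalizing a s with
  | nil => simp [occIdx]
  | cons x u ih =>
    by_cases hx : x = i
    · subst hx
      cases a <;> cases s <;> simp [occIdx_cons, ih]
    · cases s <;> simp [occIdx_cons, hx, ih]

theorem precedes_iff_exists_prefix (u : List (Fin p)) (i j : Fin p) (a b : ℕ) :
    Precedes u i a j b ↔ ∃ v, v ++ [j] <+: u ∧ v.count j = b ∧ a < v.count i := by
  constructor
  · rintro ⟨s, t, hs, ht, hst⟩
    obtain ⟨hus, hcs⟩ := (getElem?_occIdx_eq_some_iff u i a s).mp hs
    obtain ⟨hut, hct⟩ := (getElem?_occIdx_eq_some_iff u j b t).mp ht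
    refine ⟨u.take t, ?_, hct, ?_⟩
    · simpa [List.take_add_one, hut] using List.take_prefix (t + 1) u
    · calc a < (u.take (s + 1)).count i := by simp [List.take_add_one, hus, hcs]
        _ ≤ (u.take t).count i := (List.take_prefix_take_left hst).count_le i
  · rintro ⟨v, ⟨r, rfl⟩, hvj, hvi⟩
    obtain ⟨s, hs⟩ : ∃ s, (occIdx v i)[a]? = some s :=
      Option.isSome_iff_exists.mp (by simpa [length_occIdx] using hvi)
    obtain ⟨hvs, hcs⟩ := (getElem?_occIdx_eq_some_iff v i a s).mp hs
    have hsv : s < v.length := (List.getElem?_eq_some_iff.mp hvs).1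
    refine ⟨s, v.length, ?_, ?_, hsv⟩
    · rw [getElem?_occIdx_eq_some_iff]
      simp [List.getElem?_append_left hsv, hvs, List.take_append_of_le_length hsv.le, hcs]
    · rw [getElem?_occIdx_eq_some_iff]
      simp [hvj]

/-- A cut `Γ` is encoded by the number `Γ k` of nodes it keeps in chain `k`, so `Γ k = 0` is
the cutpoint `⊥`. -/
def cutHeights (C : Fin p → List ℤ) (i j : Fin p) (a b : ℕ) : Set ℕ :=
  {h : ℕ | ∃ Γ : Fin p → ℕ, (∀ k, Γ k ≤ (C k).length) ∧ Γ j = b + 1 ∧ a + 1 ≤ Γ i ∧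
    ∃ w, IsSched (fun k => (C k).take (Γ k)) w ∧ w.getLast? = some j ∧
      (height (realize (fun k => (C k).take (Γ k)) w)).toNat = h}

theorem mem_cutHeights_iff {C : Fin p → List ℤ} {i j : Fin p} {a b h : ℕ} :
    h ∈ cutHeights C i j a b ↔ ∃ w, IsSub C w ∧ w.getLast? = some j ∧ w.count j = b + 1 ∧
      a + 1 ≤ w.count i ∧ (height (realize C w)).toNat = h := by
  constructor
  · rintro ⟨Γ, hΓ, hj, hi, w, hw, hlast, hh⟩
    have hcount := (isSched_truncate_iff hΓ w).mp hw
    refine ⟨w, fun k => hcount k ▸ hΓ k, hlast, hcount j ▸ hj, hcount i ▸ hi, ?_⟩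
    rwa [← realize_truncate fun k => (hcount k).le]
  · rintro ⟨w, hsub, hlast, hj, hi, hh⟩
    refine ⟨fun k => w.count k, hsub, hj, hi, w, (isSched_truncate_iff hsub w).mpr fun _ => rfl,
      hlast, ?_⟩
    rwa [realize_truncate fun _ => le_rfl]

theorem cutHeights_nonempty {C : Fin p → List ℤ} {i j : Fin p} (hij : i ≠ j) {a b : ℕ}
    (ha : a < (C i).length) (hb : b < (C j).length) : (cutHeights C i j a b).Nonempty := by
  set w := List.replicate (a + 1) i ++ List.replicate b j ++ [j]
  refine ⟨_, mem_cutHeights_iff.mpr ⟨w, ?_, List.getLast?_concat, ?_, ?_, rfl⟩⟩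
  · intro k
    by_cases hik : i = k <;> by_cases hjk : j = k <;> subst_vars <;>
      simp_all [w, List.count_replicate]
  · simp [w, List.count_replicate, hij]
  · simp [w, List.count_replicate, List.count_singleton]

theorem zero_mem_cutHeights_iff {C : Fin p → List ℤ} {i j : Fin p} (hij : i ≠ j) {a b : ℕ} :
    0 ∈ cutHeights C i j a b ↔ ∃ u, IsSub C u ∧ ValidWord C u ∧ Precedes u i a j b := by
  simp only [mem_cutHeights_iff, precedes_iff_exists_prefix]
  constructor
  · rintro ⟨w, hsub, hlast, hj, hi, hh⟩
    obtain ⟨v, rfl⟩ := List.getLast?_eq_some_iff.mp hlast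
    have hvalid : ValidWord C (v ++ [j]) := (validWord_iff_height_eq_zero _ _).mpr
      (le_antisymm (Int.toNat_eq_zero.mp hh) (height_nonneg _))
    exact ⟨v ++ [j], hsub, hvalid, v, List.prefix_refl _, by simpa using hj,
      by simpa [List.count_singleton, hij.symm] using hi⟩
  · rintro ⟨u, hsub, hvalid, v, hvu, hvj, hvi⟩
    refine ⟨v ++ [j], hsub.of_prefix hvu, List.getLast?_concat, by simp [hvj],
      by simpa [List.count_singleton, hij.symm] using hvi, ?_⟩
    rw [(validWord_iff_height_eq_zero _ _).mp (hvalid.of_prefix hvu)]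
    rfl

theorem valid_iff_height_zero_and_race_characterization_general
    (C : Fin p → List ℤ)
    (i j : Fin p) (hij : i ≠ j) (a b : ℕ)
    (ha : a < (C i).length) (hb : b < (C j).length) :
    (∀ u, IsSub C u → (ValidWord C u ↔ height (realize C u) = 0)) ∧
    ((∃ u, IsSub C u ∧ ValidWord C u ∧ Precedes u i a j b) ↔
      sInf {h : ℕ | ∃ Γ : Fin p → ℕ, (∀ k, Γ k ≤ (C k).length) ∧
        Γ j = b + 1 ∧ a + 1 ≤ Γ i ∧
        ∃ w, IsSched (fun k => (C k).take (Γ k)) w ∧ w.getLast? = some j ∧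
          (height (realize (fun k => (C k).take (Γ k)) w)).toNat = h} = 0) := by
  refine ⟨fun u _ => validWord_iff_height_eq_zero C u, ?_⟩
  change _ ↔ sInf (cutHeights C i j a b) = 0
  rw [Nat.sInf_eq_zero, ← zero_mem_cutHeights_iff hij,
    or_iff_left (cutHeights_nonempty hij ha hb).ne_empty]

/-- A prefix subschedule is valid iff its height is 0; and `v` (node `a` of
chain `i`) precedes `w` (node `b` of chain `j`) in some valid subschedule iff
the minimum, over cuts `Γ` containing `v` and `w` with `w` last in its chain
portion, of the height of an optimal `w`-terminal schedule of the prefix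
subgraph `G[Γ]`, equals `0`. -/
theorem valid_iff_height_zero_and_race_characterization
    (C : Fin p → List ℤ) (hpm : ∀ k, ∀ x ∈ C k, x = 1 ∨ x = -1)
    (i j : Fin p) (hij : i ≠ j) (a b : ℕ)
    (ha : a < (C i).length) (hb : b < (C j).length) :
    (∀ u, IsSub C u → (ValidWord C u ↔ height (realize C u) = 0)) ∧
    ((∃ u, IsSub C u ∧ ValidWord C u ∧ Precedes u i a j b) ↔
      sInf {h : ℕ | ∃ Γ : Fin p → ℕ, (∀ k, Γ k ≤ (C k).length) ∧
        Γ j = b + 1 ∧ a + 1 ≤ Γ i ∧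
        ∃ w, IsSched (fun k => (C k).take (Γ k)) w ∧ w.getLast? = some j ∧
          (height (realize (fun k => (C k).take (Γ k)) w)).toNat = h} = 0) :=
  valid_iff_height_zero_and_race_characterization_general C i j hij a b ha hb
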